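/- For α ∈ (0,∞), the Lipschitz constant γ(α) in the additive perturbation bound is at least 2: there exist spike trains η, ν with ‖ν‖_{A,α} = 1 such that ‖LIF_{1,α}(η+ν) - LIF_{1,α}(η)‖_{A,α} can be made arbitrarily close to 2 (by letting the inter-spike time ε → 0, using η with amplitudes (-3/2, 1, 3/2) and ν with amplitudes (1,-1,1) at times ε, 2ε, 3ε). -/

import Mathlib

/-- Rounding toward zero to the grid `ϑ·ℤ`: `ϑ · sgn(v) · ⌊|v|/ϑ⌋`. -/
noncomputable def qmod (ϑ v : ℝ) : ℝ :=
  Real.sign v * ((⌊|v| / ϑ⌋ : ℤ) : ℝ) * ϑ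

/-- Membrane potential (before reset) of the reset-to-mod leaky
integrate-and-fire neuron with leakage `α` and spike times `t`. -/
noncomputable def LIFv (ϑ α : ℝ) (t a : ℕ → ℝ) : ℕ → ℝ
  | 0 => a 0
  | n + 1 =>
      (LIFv ϑ α t a n - qmod ϑ (LIFv ϑ α t a n)) * Real.exp (-α * (t (n + 1) - t n))
        + a (n + 1)

/-- Output spike amplitudes of the reset-to-mod leaky integrate-and-fire neuron. -/
noncomputable def LIFb (ϑ α : ℝ) (t a : ℕ → ℝ) (n : ℕ) : ℝ := qmod ϑ (LIFv ϑ α t a n)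

/-- The leaky Alexiewicz norm of the first `N` entries of a sequence with spike
times `t`. -/
noncomputable def LAnorm (α : ℝ) (t : ℕ → ℝ) (N : ℕ) (c : ℕ → ℝ) : ℝ :=
  ⨆ n : Fin N, |∑ j ∈ Finset.range (n.val + 1), c j * Real.exp (-α * (t n.val - t j))|

/-- The three-spike input train `η` with amplitudes `(-3/2, 1, 3/2)`. -/
noncomputable def ηex : ℕ → ℝ := fun n =>
  if n = 0 then -3/2 else if n = 1 then 1 else if n = 2 then 3/2 else 0

/-- The perturbation train `ν` with amplitudes `(1, -1, 1)`. -/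
noncomputable def νex : ℕ → ℝ := fun n =>
  if n = 0 then 1 else if n = 1 then -1 else if n = 2 then 1 else 0

lemma qmod_one (v : ℝ) : qmod 1 v = Real.sign v * ((⌊|v|⌋ : ℤ) : ℝ) := by
  simp [qmod]

lemma qmod_zero_of (v : ℝ) (h : |v| < 1) : qmod 1 v = 0 := by
  rw [qmod_one, Int.floor_eq_zero_iff.mpr ⟨abs_nonneg v, h⟩]
  simp

lemma qmod_pos_of (v : ℝ) (k : ℕ) (hk : 1 ≤ k) (h1 : (k:ℝ) ≤ v) (h2 : v < k+1) :
    qmod 1 v = k := by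
  have hv : 0 < v := lt_of_lt_of_le (by exact_mod_cast hk) h1
  rw [qmod_one, Real.sign_of_pos hv, abs_of_pos hv]
  have : ⌊v⌋ = (k:ℤ) := by
    rw [Int.floor_eq_iff]
    constructor <;> push_cast <;> linarith
  rw [this]; push_cast; ring

lemma qmod_neg32 : qmod 1 (-3/2 : ℝ) = -1 := by
  rw [qmod_one, Real.sign_of_neg (by norm_num)]
  rw [show |(-3/2:ℝ)| = 3/2 by rw [abs_of_neg] <;> norm_num]
  norm_num

lemma fin3_sup (f : Fin 3 → ℝ) : (⨆ n, f n) = max (f 0) (max (f 1) (f 2)) := by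
  apply le_antisymm
  · exact ciSup_le (fun n => by fin_cases n <;> simp [le_max_iff])
  · exact max_le (le_ciSup (Set.Finite.bddAbove (Set.finite_range f)) 0)
      (max_le (le_ciSup (Set.Finite.bddAbove (Set.finite_range f)) 1)
        (le_ciSup (Set.Finite.bddAbove (Set.finite_range f)) 2))

lemma LIFv_succ (ϑ α : ℝ) (t a : ℕ → ℝ) (n : ℕ) :
    LIFv ϑ α t a (n+1)
      = (LIFv ϑ α t a n - qmod ϑ (LIFv ϑ α t a n)) * Real.exp (-α * (t (n + 1) - t n))
        + a (n + 1) := by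
  rw [LIFv]

lemma LIFv_zero (ϑ α : ℝ) (t a : ℕ → ℝ) : LIFv ϑ α t a 0 = a 0 := by
  rw [LIFv]

set_option maxHeartbeats 2000000 in
/-- for every `α ∈ (0,∞)` the Lipschitz constant `γ(α)` is at
least `2`: with spikes at times `ε, 2ε, 3ε`, `η = (-3/2, 1, 3/2)` and
`ν = (1,-1,1)`, one has `‖ν‖_{A,α} = 1`, `LIF_{1,α}(η)` has outputs `(-1,0,1)`,
`LIF_{1,α}(η+ν)` has outputs `(0,0,2)`, the difference has norm
`1 + e^{-2εα}`, and for any `δ > 0` a suitable `ε > 0` makes this norm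
`δ`-close to `2`. -/
theorem LIF_gamma_ge_two (α : ℝ) (hα : 0 < α) (δ : ℝ) (hδ : 0 < δ) :
    ∃ ε : ℝ, 0 < ε ∧
      (let t : ℕ → ℝ := fun n => ε * (n + 1)
       LAnorm α t 3 νex = 1 ∧
       LIFb 1 α t ηex 0 = -1 ∧ LIFb 1 α t ηex 1 = 0 ∧ LIFb 1 α t ηex 2 = 1 ∧
       LIFb 1 α t (fun i => ηex i + νex i) 0 = 0 ∧
       LIFb 1 α t (fun i => ηex i + νex i) 1 = 0 ∧
       LIFb 1 α t (fun i => ηex i + νex i) 2 = 2 ∧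
       LAnorm α t 3 (fun n => LIFb 1 α t (fun i => ηex i + νex i) n - LIFb 1 α t ηex n)
         = 1 + Real.exp (-2 * ε * α) ∧
       2 - δ < 1 + Real.exp (-2 * ε * α)) := by
  refine ⟨δ/(4*α), by positivity, ?_⟩
  set ε := δ/(4*α) with hεdef
  have hε : 0 < ε := by positivity
  intro t
  set E := Real.exp (-(α*ε)) with hEdef
  have hE0 : 0 < E := Real.exp_pos _
  have hE1 : E < 1 := Real.exp_lt_one_iff.mpr (by nlinarith)
  -- exponential factors
  have ht10 : t 1 - t 0 = ε := by simp only [t]; push_cast; ring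
  have ht21 : t 2 - t 1 = ε := by simp only [t]; push_cast; ring
  have ht20 : t 2 - t 0 = 2*ε := by simp only [t]; push_cast; ring
  have he00 : Real.exp (-α * (t 0 - t 0)) = 1 := by simp
  have he11 : Real.exp (-α * (t 1 - t 1)) = 1 := by simp
  have he22 : Real.exp (-α * (t 2 - t 2)) = 1 := by simp
  have he10 : Real.exp (-α * (t 1 - t 0)) = E := by rw [ht10, hEdef]; ring_nf
  have he21 : Real.exp (-α * (t 2 - t 1)) = E := by rw [ht21, hEdef]; ring_nf
  have he20 : Real.exp (-α * (t 2 - t 0)) = E * E := by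
    rw [ht20, show -α * (2*ε) = (-(α*ε)) + (-(α*ε)) by ring, Real.exp_add]
  -- membrane potentials for η
  have hv0 : LIFv 1 α t ηex 0 = -3/2 := by rw [LIFv_zero]; norm_num [ηex]
  have hb0 : LIFb 1 α t ηex 0 = -1 := by rw [LIFb, hv0, qmod_neg32]
  have hv1 : LIFv 1 α t ηex 1 = 1 - E/2 := by
    rw [LIFv_succ, hv0, qmod_neg32, he10]
    norm_num [ηex]; ring
  have hb1 : LIFb 1 α t ηex 1 = 0 := by
    rw [LIFb, hv1]
    exact qmod_zero_of _ (by rw [abs_of_pos (by linarith)]; linarith)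
  have hv2 : LIFv 1 α t ηex 2 = (1 - E/2) * E + 3/2 := by
    rw [LIFv_succ, hv1, qmod_zero_of _ (by rw [abs_of_pos (by linarith)]; linarith), he21]
    norm_num [ηex]
  have hb2 : LIFb 1 α t ηex 2 = 1 := by
    rw [LIFb, hv2]
    have := qmod_pos_of ((1 - E/2) * E + 3/2) 1 le_rfl (by nlinarith) (by nlinarith)
    rw [this]; norm_num
  -- membrane potentials for η + ν
  have hw0 : LIFv 1 α t (fun i => ηex i + νex i) 0 = -1/2 := by
    rw [LIFv_zero]; norm_num [ηex, νex]
  have hc0 : LIFb 1 α t (fun i => ηex i + νex i) 0 = 0 := by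
    rw [LIFb, hw0]
    exact qmod_zero_of _ (by rw [abs_of_neg (by norm_num)]; norm_num)
  have hw1 : LIFv 1 α t (fun i => ηex i + νex i) 1 = -(E/2) := by
    rw [LIFv_succ, hw0, qmod_zero_of _ (by rw [abs_of_neg (by norm_num)]; norm_num), he10]
    norm_num [ηex, νex]; ring
  have hc1 : LIFb 1 α t (fun i => ηex i + νex i) 1 = 0 := by
    rw [LIFb, hw1]
    exact qmod_zero_of _ (by rw [abs_of_neg (by linarith)]; linarith)
  have hw2 : LIFv 1 α t (fun i => ηex i + νex i) 2 = -(E/2) * E + 5/2 := by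
    rw [LIFv_succ, hw1, qmod_zero_of _ (by rw [abs_of_neg (by linarith)]; linarith), he21]
    norm_num [ηex, νex]
  have hc2 : LIFb 1 α t (fun i => ηex i + νex i) 2 = 2 := by
    rw [LIFb, hw2]
    have := qmod_pos_of (-(E/2) * E + 5/2) 2 (by norm_num) (by nlinarith) (by nlinarith)
    rw [this]; norm_num
  -- norm of ν
  have hνnorm : LAnorm α t 3 νex = 1 := by
    rw [LAnorm, fin3_sup]
    simp only [Fin.val_zero, Fin.val_one, show ((2 : Fin 3) : ℕ) = 2 from rfl,
      Finset.sum_range_succ, Finset.sum_range_one, νex, he00, he11, he22, he10, he21, he20]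
    norm_num
    exact ⟨abs_le.mpr ⟨by nlinarith, by nlinarith⟩, abs_le.mpr ⟨by nlinarith, by nlinarith⟩⟩
  -- norm of the difference
  have he2' : Real.exp (-2 * ε * α) = E * E := by
    rw [show -2 * ε * α = (-(α*ε)) + (-(α*ε)) by ring, Real.exp_add]
  have hdiff : LAnorm α t 3
      (fun n => LIFb 1 α t (fun i => ηex i + νex i) n - LIFb 1 α t ηex n)
        = 1 + Real.exp (-2 * ε * α) := by
    rw [LAnorm, fin3_sup]
    simp only [Fin.val_zero, Fin.val_one, show ((2 : Fin 3) : ℕ) = 2 from rfl,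
      Finset.sum_range_succ, Finset.sum_range_one, hb0, hb1, hb2, hc0, hc1, hc2,
      he00, he11, he22, he10, he21, he20, he2']
    norm_num
    rw [abs_of_pos hE0, abs_of_pos (by nlinarith : (0:ℝ) < E * E + 1)]
    rw [max_eq_right (by nlinarith : E ≤ E * E + 1),
      max_eq_right (by nlinarith : (1:ℝ) ≤ E * E + 1)]
    ring
  have hfin : 2 - δ < 1 + Real.exp (-2 * ε * α) := by
    have hne : (-2 * ε * α) ≠ 0 := by nlinarith
    have h1 := Real.add_one_lt_exp hne
    have h2 : ε * α = δ/4 := by rw [hεdef]; field_simp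
    nlinarith
  exact ⟨hνnorm, hb0, hb1, hb2, hc0, hc1, hc2, hdiff, hfin⟩
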